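/- arXiv:2409.01796 — 3 statements merged into one kernel-verified Lean document; each statement's English description precedes it below -/
import Mathlib

section
/- Let G be a finite simple graph with distinct vertices u, u' and v such that v is the unique neighbor of u among the vertices other than u', and the neighborhood of u' is nonempty and contained in {u, v}. Then b^A_g(G) ≥ b^A_g(G − {u,u'}) and b^I_g(G) ≥ b^I_g(G − {u,u'}), where G − {u,u'} is the graph obtained from G by deleting the vertices u and u' and all edges incident to them. -/
open SimpleGraph

/-- The balance score of a state `(S0, S1)` in a graph `G`: the number of edges of `G` with
one endpoint in `S0` and the other in `S1`, minus the number of edges with both endpoints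
in `S0` or both endpoints in `S1`. -/
noncomputable def bscore {V : Type*} (G : SimpleGraph V) (S0 S1 : Set V) : ℤ :=
  ({e ∈ G.edgeSet | ∃ u ∈ S0, ∃ v ∈ S1, e = s(u, v)}.ncard : ℤ) -
  ({e ∈ G.edgeSet | (∃ u ∈ S0, ∃ v ∈ S0, e = s(u, v)) ∨
      (∃ u ∈ S1, ∃ v ∈ S1, e = s(u, v))}.ncard : ℤ)

/-- The value of the balance game computed by backward induction, with `k` moves remaining.
`t = true` means it is Admirable's (the minimizer's) turn, `t = false` means it is
Impish's (the maximizer's) turn.  `S0` is the set of vertices selected by Admirable so far,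
`S1` the set selected by Impish. -/
noncomputable def gameVal {V : Type*} [Fintype V] (G : SimpleGraph V) :
    ℕ → Bool → Finset V → Finset V → ℤ
  | 0, _, S0, S1 => bscore G ↑S0 ↑S1
  | (k + 1), t, S0, S1 =>
    letI := Classical.decEq V
    if h : (Finset.univ \ (S0 ∪ S1)).Nonempty then
      if t then (Finset.univ \ (S0 ∪ S1)).inf' h fun v => gameVal G k false (insert v S0) S1
      else (Finset.univ \ (S0 ∪ S1)).sup' h fun v => gameVal G k true S0 (insert v S1)
    else bscore G ↑S0 ↑S1

/-- The (A)-start game balance number `b^A_g(G)`. -/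
noncomputable def balA {V : Type*} [Fintype V] (G : SimpleGraph V) : ℤ :=
  gameVal G (Fintype.card V) true ∅ ∅

/-- The (I)-start game balance number `b^I_g(G)`. -/
noncomputable def balI {V : Type*} [Fintype V] (G : SimpleGraph V) : ℤ :=
  gameVal G (Fintype.card V) false ∅ ∅

/-- The value of the cordiality game computed by backward induction (final score is
`|bscore|`), with `k` moves remaining; `t = true` means it is Admirable's turn. -/
noncomputable def cordVal {V : Type*} [Fintype V] (G : SimpleGraph V) :
    ℕ → Bool → Finset V → Finset V → ℤ
  | 0, _, S0, S1 => |bscore G ↑S0 ↑S1|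
  | (k + 1), t, S0, S1 =>
    letI := Classical.decEq V
    if h : (Finset.univ \ (S0 ∪ S1)).Nonempty then
      if t then (Finset.univ \ (S0 ∪ S1)).inf' h fun v => cordVal G k false (insert v S0) S1
      else (Finset.univ \ (S0 ∪ S1)).sup' h fun v => cordVal G k true S0 (insert v S1)
    else |bscore G ↑S0 ↑S1|

/-- The (A)-start game cordiality number `c^A_g(G)`. -/
noncomputable def cordA {V : Type*} [Fintype V] (G : SimpleGraph V) : ℤ :=
  cordVal G (Fintype.card V) true ∅ ∅

/-- The (I)-start game cordiality number `c^I_g(G)`. -/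
noncomputable def cordI {V : Type*} [Fintype V] (G : SimpleGraph V) : ℤ :=
  cordVal G (Fintype.card V) false ∅ ∅

/-!
Impish answers a move on `u` or `u'` with the other vertex of the pair, and otherwise copies an
optimal strategy for `G - {u, u'}`; when that game has no move left, he takes `u` himself and
Admirable is forced onto `u'`. Once `u` and `u'` lie on opposite sides, the edges of `G` not in
`G - {u, u'}` are among `uv`, `uu'`, `u'v`, and together they never lower the score: `uu'` is
bichromatic; if `v` is on the side of `u`, the monochromatic `uv` is offset by the bichromatic
edge at `u'`, which exists; otherwise `uv` is bichromatic and at most `u'v` is monochromatic.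
-/

section

variable {V : Type*}

open Finset

namespace SimpleGraph

def crossEdges (G : SimpleGraph V) (A B : Set V) : Set (Sym2 V) :=
  {e ∈ G.edgeSet | ∃ a ∈ A, ∃ b ∈ B, e = s(a, b)}

variable (G : SimpleGraph V)

theorem crossEdges_comm (A B : Set V) : G.crossEdges A B = G.crossEdges B A := by
  ext e
  constructor <;> rintro ⟨he, a, ha, b, hb, rfl⟩ <;> exact ⟨he, b, hb, a, ha, Sym2.eq_swap⟩

variable {G} in
theorem mk_mem_crossEdges {A B : Set V} {a b : V} (hab : G.Adj a b) (ha : a ∈ A) (hb : b ∈ B) :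
    s(a, b) ∈ G.crossEdges A B :=
  ⟨hab, a, ha, b, hb, rfl⟩

variable {G} in
theorem mem_of_mk_mem_crossEdges_self {T : Set V} {x y : V} (h : s(x, y) ∈ G.crossEdges T T) :
    x ∈ T ∧ y ∈ T := by
  obtain ⟨-, a, ha, b, hb, he⟩ := h
  rcases Sym2.eq_iff.mp he with ⟨rfl, rfl⟩ | ⟨rfl, rfl⟩
  exacts [⟨ha, hb⟩, ⟨hb, ha⟩]

theorem image_crossEdges_induce (S A B : Set V) :
    Sym2.map (↑) '' (G.induce S).crossEdges (Subtype.val ⁻¹' A) (Subtype.val ⁻¹' B) =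
      G.crossEdges A B ∩ S.sym2 := by
  ext e
  constructor
  · rintro ⟨_, ⟨he, a, ha, b, hb, rfl⟩, rfl⟩
    exact ⟨⟨he, a, ha, b, hb, rfl⟩, a.2, b.2⟩
  · rintro ⟨⟨he, a, ha, b, hb, rfl⟩, haS, hbS⟩
    exact ⟨s(⟨a, haS⟩, ⟨b, hbS⟩), ⟨he, ⟨a, haS⟩, ha, ⟨b, hbS⟩, hb, rfl⟩, rfl⟩

end SimpleGraph

theorem bscore_eq_ncard_sub_ncard (G : SimpleGraph V) (A B : Set V) :
    bscore G A B =
      (G.crossEdges A B).ncard - (G.crossEdges A A ∪ G.crossEdges B B).ncard := by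
  rw [bscore, Set.sep_or]
  rfl

theorem bscore_comm (G : SimpleGraph V) (A B : Set V) : bscore G A B = bscore G B A := by
  rw [bscore_eq_ncard_sub_ncard, bscore_eq_ncard_sub_ncard, G.crossEdges_comm A B,
    Set.union_comm]

theorem bscore_eq_bscore_induce_add [Finite V] (G : SimpleGraph V) (S A B : Set V) :
    bscore G A B = bscore (G.induce S) (Subtype.val ⁻¹' A) (Subtype.val ⁻¹' B) +
      ((G.crossEdges A B \ S.sym2).ncard -
        ((G.crossEdges A A ∪ G.crossEdges B B) \ S.sym2).ncard) := by
  have hinj : Function.Injective (Sym2.map ((↑) : S → V)) :=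
    Sym2.map.injective Subtype.val_injective
  have split (X : Set (Sym2 V)) : X.ncard = (X ∩ S.sym2).ncard + (X \ S.sym2).ncard :=
    (Set.ncard_inter_add_ncard_sdiff_eq_ncard X _ X.toFinite).symm
  rw [bscore_eq_ncard_sub_ncard, bscore_eq_ncard_sub_ncard, split (G.crossEdges A B),
    split (G.crossEdges A A ∪ _), ← Set.ncard_image_of_injective _ hinj,
    ← Set.ncard_image_of_injective _ hinj, Set.image_union, G.image_crossEdges_induce,
    G.image_crossEdges_induce, G.image_crossEdges_induce, Set.union_inter_distrib_right]
  push_cast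
  ring

namespace Finset

variable {p : V → Prop} [DecidablePred p]

theorem subtype_insert_of_pos [DecidableEq V] {a : V} (ha : p a) (s : Finset V) :
    (insert a s).subtype p = insert ⟨a, ha⟩ (s.subtype p) := by
  ext x
  simp [Subtype.ext_iff]

theorem subtype_insert_of_neg [DecidableEq V] {a : V} (ha : ¬p a) (s : Finset V) :
    (insert a s).subtype p = s.subtype p := by
  ext x
  simp only [mem_subtype, mem_insert, or_iff_right_iff_imp]
  exact fun h => (ha (h ▸ x.2)).elim

theorem coe_subtype (s : Finset V) : (s.subtype p : Set (Subtype p)) = Subtype.val ⁻¹' s := by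
  ext x
  simp

end Finset

section Game

variable [Fintype V] [DecidableEq V] (G : SimpleGraph V)

theorem gameVal_succ (k : ℕ) (t : Bool) (S0 S1 : Finset V) :
    gameVal G (k + 1) t S0 S1 =
      if h : (S0 ∪ S1)ᶜ.Nonempty then
        if t then (S0 ∪ S1)ᶜ.inf' h fun w => gameVal G k false (insert w S0) S1
        else (S0 ∪ S1)ᶜ.sup' h fun w => gameVal G k true S0 (insert w S1)
      else bscore G S0 S1 := by
  rw [gameVal, Subsingleton.elim (Classical.decEq V) ‹_›]
  rfl

variable {G} {k : ℕ} {S0 S1 : Finset V}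

theorem gameVal_succ_true_le {w : V} (hw : w ∉ S0 ∪ S1) :
    gameVal G (k + 1) true S0 S1 ≤ gameVal G k false (insert w S0) S1 := by
  have hw' : w ∈ (S0 ∪ S1)ᶜ := Finset.mem_compl.mpr hw
  rw [gameVal_succ, dif_pos ⟨w, hw'⟩, if_pos rfl]
  exact Finset.inf'_le _ hw'

theorem le_gameVal_succ_false {w : V} (hw : w ∉ S0 ∪ S1) :
    gameVal G k true S0 (insert w S1) ≤ gameVal G (k + 1) false S0 S1 := by
  have hw' : w ∈ (S0 ∪ S1)ᶜ := Finset.mem_compl.mpr hw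
  rw [gameVal_succ, dif_pos ⟨w, hw'⟩, if_neg Bool.false_ne_true]
  exact Finset.le_sup' (fun w => gameVal G k true S0 (insert w S1)) hw'

theorem le_gameVal_succ_true_iff (h : (S0 ∪ S1)ᶜ.Nonempty) {x : ℤ} :
    x ≤ gameVal G (k + 1) true S0 S1 ↔ ∀ w ∉ S0 ∪ S1, x ≤ gameVal G k false (insert w S0) S1 := by
  rw [gameVal_succ, dif_pos h, if_pos rfl, Finset.le_inf'_iff]
  simp only [Finset.mem_compl]

theorem gameVal_succ_false_le_iff (h : (S0 ∪ S1)ᶜ.Nonempty) {x : ℤ} :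
    gameVal G (k + 1) false S0 S1 ≤ x ↔ ∀ w ∉ S0 ∪ S1, gameVal G k true S0 (insert w S1) ≤ x := by
  rw [gameVal_succ, dif_pos h, if_neg Bool.false_ne_true, Finset.sup'_le_iff]
  simp only [Finset.mem_compl]

end Game

section Mirror

variable [Fintype V] [DecidableEq V]

theorem gameVal_induce_le_of_forall_bscore_le (G : SimpleGraph V) (S : Set V)
    [DecidablePred (· ∈ S)] {k : ℕ} {t : Bool} {S0 S1 : Finset V} (hdisj : Disjoint S0 S1)
    (hS : ∀ x ∉ S, x ∈ S0 ∪ S1) (hk : #(S0 ∪ S1)ᶜ = k)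
    (hscore : ∀ T0 T1 : Finset V, S0 ⊆ T0 → S1 ⊆ T1 → Disjoint T0 T1 → T0 ∪ T1 = .univ →
      bscore (G.induce S) (Subtype.val ⁻¹' T0) (Subtype.val ⁻¹' T1) ≤ bscore G T0 T1) :
    gameVal (G.induce S) k t (S0.subtype (· ∈ S)) (S1.subtype (· ∈ S)) ≤ gameVal G k t S0 S1 := by
  induction k generalizing t S0 S1 with
  | zero =>
    rw [Finset.card_eq_zero, Finset.compl_eq_empty_iff] at hk
    simpa only [gameVal, Finset.coe_subtype] using hscore S0 S1 subset_rfl subset_rfl hdisj hk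
  | succ k ih =>
    have hne : (S0 ∪ S1)ᶜ.Nonempty := card_pos.mp (hk.trans_gt k.succ_pos)
    have mem_S {x : V} (hx : x ∉ S0 ∪ S1) : x ∈ S := by_contra fun h => hx (hS x h)
    have hk' {x : V} (hx : x ∉ S0 ∪ S1) : #(insert x (S0 ∪ S1))ᶜ = k := by
      rw [compl_insert, card_erase_of_mem (mem_compl.mpr hx), hk, Nat.add_sub_cancel]
    cases t with
    | true =>
      rw [le_gameVal_succ_true_iff hne]
      intro x hx
      refine (gameVal_succ_true_le (w := ⟨x, mem_S hx⟩) (by simpa using hx)).trans ?_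
      rw [← subtype_insert_of_pos]
      exact ih (disjoint_insert_left.mpr ⟨fun h => hx (mem_union_right _ h), hdisj⟩)
        (fun y hy => insert_union x S0 S1 ▸ mem_insert_of_mem (hS y hy))
        (insert_union x S0 S1 ▸ hk' hx)
        fun T0 T1 h0 h1 => hscore T0 T1 ((subset_insert x S0).trans h0) h1
    | false =>
      obtain ⟨w, hw⟩ := hne
      rw [gameVal_succ_false_le_iff ⟨⟨w, mem_S (mem_compl.mp hw)⟩, by simpa using hw⟩]
      rintro ⟨x, hxS⟩ hx
      replace hx : x ∉ S0 ∪ S1 := by simpa using hx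
      rw [← subtype_insert_of_pos hxS]
      exact (ih (disjoint_insert_right.mpr ⟨fun h => hx (mem_union_left _ h), hdisj⟩)
        (fun y hy => union_insert x S0 S1 ▸ mem_insert_of_mem (hS y hy))
        (union_insert x S0 S1 ▸ hk' hx)
        fun T0 T1 h0 h1 => hscore T0 T1 h0 ((subset_insert x S1).trans h1)).trans
        (le_gameVal_succ_false hx)

end Mirror

structure SimpleGraph.IsPendantPair (G : SimpleGraph V) (u u' v : V) : Prop where
  ne : u ≠ u'
  ne_right : u' ≠ v
  adj_left_iff : ∀ w, w ≠ u' → (G.Adj u w ↔ w = v)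
  neighborSet_right_nonempty : (G.neighborSet u').Nonempty
  neighborSet_right_subset : G.neighborSet u' ⊆ {u, v}

namespace SimpleGraph.IsPendantPair

variable {G : SimpleGraph V} {u u' v : V}

theorem eq_of_mem_edgeSet_of_notMem_sym2 (hp : G.IsPendantPair u u' v) {e : Sym2 V}
    (he : e ∈ G.edgeSet) (hS : e ∉ {w | w ≠ u ∧ w ≠ u'}.sym2) :
    e = s(u, v) ∨ e = s(u, u') ∨ e = s(u', v) := by
  have key (x y : V) (hxy : G.Adj x y) (hx : x = u ∨ x = u') :
      s(x, y) = s(u, v) ∨ s(x, y) = s(u, u') ∨ s(x, y) = s(u', v) := by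
    rcases hx with rfl | rfl
    · by_cases hy : y = u'
      · exact .inr (.inl (by rw [hy]))
      · exact .inl (by rw [(hp.adj_left_iff y hy).mp hxy])
    · rcases hp.neighborSet_right_subset hxy with rfl | rfl
      exacts [.inr (.inl Sym2.eq_swap), .inr (.inr rfl)]
  induction e using Sym2.ind with
  | _ a b =>
    simp only [Set.mk_mem_sym2_iff, Set.mem_ofPred_eq, not_and_or, not_not, ne_eq] at hS
    rcases hS with ha | hb
    · exact key a b he (by tauto)
    · simpa only [Sym2.eq_swap (a := a)] using key b a (G.adj_symm he) (by tauto)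

theorem bscore_induce_le_of_mem_of_mem [Finite V] (hp : G.IsPendantPair u u' v) {A B : Set V}
    (hAB : Disjoint A B) (hv : v ∈ A ∪ B) (hu : u ∈ A) (hu' : u' ∈ B) :
    bscore (G.induce {w | w ≠ u ∧ w ≠ u'}) (Subtype.val ⁻¹' A) (Subtype.val ⁻¹' B) ≤
      bscore G A B := by
  set S : Set V := {w | w ≠ u ∧ w ≠ u'}
  have notMem_sym2 {e : Sym2 V} (x : V) (hx : x = u ∨ x = u') (hxe : x ∈ e) : e ∉ S.sym2 :=
    fun h => (Set.mem_sym2_iff_subset.mp h hxe).elim (fun h1 h2 => hx.elim h1 h2)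
  have hAB' {x : V} (hA : x ∈ A) (hB : x ∈ B) : False := Set.disjoint_left.mp hAB hA hB
  suffices ∃ e₀, (G.crossEdges A A ∪ G.crossEdges B B) \ S.sym2 ⊆ {e₀} ∧
      (G.crossEdges A B \ S.sym2).Nonempty by
    obtain ⟨e₀, hmono, hcross⟩ := this
    have := (Set.ncard_le_ncard hmono).trans (Set.ncard_singleton e₀).le
    have := (Set.ncard_pos (Set.toFinite _)).mpr hcross
    rw [bscore_eq_bscore_induce_add G S]
    omega
  have hmono {x y : V} (hx : x ∈ A) (hy : y ∈ B) :
      s(x, y) ∉ G.crossEdges A A ∪ G.crossEdges B B := by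
    rintro (h | h)
    exacts [hAB' (mem_of_mk_mem_crossEdges_self h).2 hy,
      hAB' hx (mem_of_mk_mem_crossEdges_self h).1]
  have hout {e : Sym2 V} (he : e ∈ (G.crossEdges A A ∪ G.crossEdges B B) \ S.sym2) :
      e = s(u, v) ∨ e = s(u', v) := by
    have heG : e ∈ G.edgeSet := by rcases he.1 with h | h <;> exact h.1
    rcases hp.eq_of_mem_edgeSet_of_notMem_sym2 heG he.2 with rfl | rfl | rfl
    exacts [.inl rfl, (hmono hu hu' he.1).elim, .inr rfl]
  rcases hv with hv | hv
  · refine ⟨s(u, v), fun e he => ?_, ?_⟩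
    · rcases hout he with rfl | rfl
      exacts [rfl, (hmono hv hu' (Sym2.eq_swap ▸ he.1)).elim]
    · obtain ⟨w, hw⟩ := hp.neighborSet_right_nonempty
      have hwA : w ∈ A := by rcases hp.neighborSet_right_subset hw with rfl | rfl <;> assumption
      exact ⟨s(w, u'), mk_mem_crossEdges (G.adj_symm hw) hwA hu',
        notMem_sym2 u' (.inr rfl) (by simp)⟩
  · refine ⟨s(u', v), fun e he => ?_, ?_⟩
    · rcases hout he with rfl | rfl
      exacts [(hmono hu hv he.1).elim, rfl]
    · exact ⟨s(u, v), mk_mem_crossEdges ((hp.adj_left_iff v hp.ne_right.symm).mpr rfl) hu hv,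
        notMem_sym2 u (.inl rfl) (by simp)⟩

theorem bscore_induce_le [Finite V] (hp : G.IsPendantPair u u' v) {A B : Set V}
    (hAB : Disjoint A B) (hv : v ∈ A ∪ B) (hside : u ∈ A ∧ u' ∈ B ∨ u ∈ B ∧ u' ∈ A) :
    bscore (G.induce {w | w ≠ u ∧ w ≠ u'}) (Subtype.val ⁻¹' A) (Subtype.val ⁻¹' B) ≤
      bscore G A B := by
  rcases hside with ⟨hu, hu'⟩ | ⟨hu, hu'⟩
  · exact hp.bscore_induce_le_of_mem_of_mem hAB hv hu hu'
  · rw [bscore_comm G, bscore_comm (G.induce _)]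
    exact hp.bscore_induce_le_of_mem_of_mem hAB.symm (Set.union_comm A B ▸ hv) hu hu'

section Game

variable [Fintype V] [DecidableEq V]

theorem gameVal_induce_le_of_split (hp : G.IsPendantPair u u' v) {k : ℕ} {t : Bool}
    {S0 S1 : Finset V} {a b : V} (hab : a = u ∧ b = u' ∨ a = u' ∧ b = u)
    (hdisj : Disjoint S0 S1) (ha : a ∉ S0 ∪ S1) (hb : b ∉ S0 ∪ S1) (hk : #(S0 ∪ S1)ᶜ = k + 2) :
    gameVal (G.induce {w | w ≠ u ∧ w ≠ u'}) k t (S0.subtype (· ∈ {w | w ≠ u ∧ w ≠ u'}))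
        (S1.subtype (· ∈ {w | w ≠ u ∧ w ≠ u'})) ≤
      gameVal G k t (insert a S0) (insert b S1) := by
  have hne : a ≠ b := by rcases hab with ⟨rfl, rfl⟩ | ⟨rfl, rfl⟩ <;> simp [hp.ne, hp.ne.symm]
  have haS : a ∉ {w | w ≠ u ∧ w ≠ u'} := by rcases hab with ⟨rfl, -⟩ | ⟨rfl, -⟩ <;> simp
  have hbS : b ∉ {w | w ≠ u ∧ w ≠ u'} := by rcases hab with ⟨-, rfl⟩ | ⟨-, rfl⟩ <;> simp
  rw [mem_union, not_or] at ha hb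
  rw [← subtype_insert_of_neg haS S0, ← subtype_insert_of_neg hbS S1]
  refine gameVal_induce_le_of_forall_bscore_le G _ ?_ ?_ ?_ ?_
  · simp [disjoint_insert_left, disjoint_insert_right, hne.symm, ha.2, hb.1, hdisj]
  · intro x hx
    have hx' : x = u ∨ x = u' := by simp only [Set.mem_ofPred_eq] at hx; tauto
    rcases hab with ⟨rfl, rfl⟩ | ⟨rfl, rfl⟩ <;> rcases hx' with rfl | rfl <;> simp
  · rw [insert_union, union_insert, compl_insert, compl_insert,
      card_erase_of_mem (by simp [hne, ha.1, ha.2]), card_erase_of_mem (by simp [hb.1, hb.2]),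
      hk]
    rfl
  · intro T0 T1 h0 h1 hT hcov
    have hv : v ∈ (T0 : Set V) ∪ T1 := by rw [← coe_union, hcov, coe_univ]; trivial
    refine hp.bscore_induce_le (disjoint_coe.mpr hT) hv ?_
    have ha0 := h0 (mem_insert_self a S0)
    have hb1 := h1 (mem_insert_self b S1)
    rcases hab with ⟨rfl, rfl⟩ | ⟨rfl, rfl⟩
    exacts [.inl ⟨ha0, hb1⟩, .inr ⟨hb1, ha0⟩]

theorem gameVal_induce_le_of_forall_eq (hp : G.IsPendantPair u u' v) {k : ℕ} {S0 S1 : Finset V}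
    (hdisj : Disjoint S0 S1) (hu : u ∉ S0 ∪ S1) (hu' : u' ∉ S0 ∪ S1) (hk : #(S0 ∪ S1)ᶜ = k + 2)
    (hS : ∀ w ∉ S0 ∪ S1, w ≠ u → w = u') :
    gameVal (G.induce {w | w ≠ u ∧ w ≠ u'}) k false (S0.subtype (· ∈ {w | w ≠ u ∧ w ≠ u'}))
        (S1.subtype (· ∈ {w | w ≠ u ∧ w ≠ u'})) ≤
      gameVal G (k + 2) false S0 S1 :=
  calc _ ≤ gameVal G k false (insert u' S0) (insert u S1) :=
        hp.gameVal_induce_le_of_split (.inr ⟨rfl, rfl⟩) hdisj hu' hu hk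
    _ ≤ gameVal G (k + 1) true S0 (insert u S1) := by
      rw [le_gameVal_succ_true_iff ⟨u', by simpa [hp.ne.symm] using hu'⟩]
      intro w hw
      rw [union_insert, mem_insert, not_or] at hw
      rw [hS w hw.2 hw.1]
    _ ≤ gameVal G (k + 2) false S0 S1 := le_gameVal_succ_false hu

theorem gameVal_induce_le (hp : G.IsPendantPair u u' v) {k : ℕ} {t : Bool} {S0 S1 : Finset V}
    (hdisj : Disjoint S0 S1) (hu : u ∉ S0 ∪ S1) (hu' : u' ∉ S0 ∪ S1) (hk : #(S0 ∪ S1)ᶜ = k + 2) :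
    gameVal (G.induce {w | w ≠ u ∧ w ≠ u'}) k t (S0.subtype (· ∈ {w | w ≠ u ∧ w ≠ u'}))
        (S1.subtype (· ∈ {w | w ≠ u ∧ w ≠ u'})) ≤
      gameVal G (k + 2) t S0 S1 := by
  induction k using Nat.strong_induction_on generalizing t S0 S1 with
  | _ k ih =>
  rw [mem_union, not_or] at hu hu'
  have hk' {w : V} (hw : w ∉ S0 ∪ S1) : #(insert w (S0 ∪ S1))ᶜ = k + 1 := by
    rw [compl_insert, card_erase_of_mem (mem_compl.mpr hw), hk]
    rfl
  have exists_eq_succ {w : V} (hw : w ∉ S0 ∪ S1) (hwu : w ≠ u) (hwu' : w ≠ u') :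
      ∃ m, k = m + 1 := by
    have : 2 < #(S0 ∪ S1)ᶜ := two_lt_card.mpr ⟨u, by simpa using hu, u', by simpa using hu',
      w, by simpa using hw, hp.ne, Ne.symm hwu, Ne.symm hwu'⟩
    exact Nat.exists_eq_add_one.mpr (by omega)
  cases t with
  | true =>
    rw [le_gameVal_succ_true_iff ⟨u, by simpa using hu⟩]
    intro w hw
    by_cases hwu : w = u
    · subst hwu
      exact (hp.gameVal_induce_le_of_split (.inl ⟨rfl, rfl⟩) hdisj hw (by simpa using hu') hk).trans
        (le_gameVal_succ_false (by simpa [hp.ne.symm] using hu'))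
    by_cases hwu' : w = u'
    · subst hwu'
      exact (hp.gameVal_induce_le_of_split (.inr ⟨rfl, rfl⟩) hdisj hw (by simpa using hu) hk).trans
        (le_gameVal_succ_false (by simpa [hp.ne] using hu))
    obtain ⟨m, rfl⟩ := exists_eq_succ hw hwu hwu'
    refine (gameVal_succ_true_le (w := ⟨w, hwu, hwu'⟩) (by simpa using hw)).trans ?_
    rw [← subtype_insert_of_pos]
    exact ih m m.lt_succ_self (disjoint_insert_left.mpr ⟨fun h => hw (mem_union_right _ h), hdisj⟩)
      (by simp [Ne.symm hwu, hu.1, hu.2]) (by simp [Ne.symm hwu', hu'.1, hu'.2])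
      (insert_union w S0 S1 ▸ hk' hw)
  | false =>
    by_cases hS : ∃ w ∉ S0 ∪ S1, w ≠ u ∧ w ≠ u'
    · obtain ⟨w, hw, hwS⟩ := hS
      obtain ⟨m, rfl⟩ := exists_eq_succ hw hwS.1 hwS.2
      rw [gameVal_succ_false_le_iff ⟨⟨w, hwS⟩, by simpa using hw⟩]
      rintro ⟨x, hxu, hxu'⟩ hx
      replace hx : x ∉ S0 ∪ S1 := by simpa using hx
      rw [← subtype_insert_of_pos]
      exact (ih m m.lt_succ_self
        (disjoint_insert_right.mpr ⟨fun h => hx (mem_union_left _ h), hdisj⟩)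
        (by simp [Ne.symm hxu, hu.1, hu.2]) (by simp [Ne.symm hxu', hu'.1, hu'.2])
        (union_insert x S0 S1 ▸ hk' hx)).trans (le_gameVal_succ_false hx)
    · push Not at hS
      exact hp.gameVal_induce_le_of_forall_eq hdisj (by simpa using hu) (by simpa using hu') hk hS

end Game

end SimpleGraph.IsPendantPair

end

theorem statement_9_general {V : Type*} [Fintype V] [DecidableEq V] (G : SimpleGraph V)
    (u u' v : V) (huu' : u ≠ u') (hu'v : u' ≠ v)
    (hu : ∀ w, w ≠ u' → (G.Adj u w ↔ w = v))
    (hne : (G.neighborSet u').Nonempty) (hsub : G.neighborSet u' ⊆ {u, v}) :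
    balA (G.induce {w | w ≠ u ∧ w ≠ u'}) ≤ balA G ∧
    balI (G.induce {w | w ≠ u ∧ w ≠ u'}) ≤ balI G := by
  have hp : G.IsPendantPair u u' v := ⟨huu', hu'v, hu, hne, hsub⟩
  have hcard : Fintype.card {w | w ≠ u ∧ w ≠ u'} + 2 = Fintype.card V := by
    rw [Fintype.card_subtype, ← Finset.card_compl_add_card {u, u'}, Finset.card_pair huu']
    congr 2
    ext w
    simp
  have key (t : Bool) :
      gameVal (G.induce {w | w ≠ u ∧ w ≠ u'}) (Fintype.card {w | w ≠ u ∧ w ≠ u'}) t ∅ ∅ ≤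
        gameVal G (Fintype.card V) t ∅ ∅ := by
    have h := hp.gameVal_induce_le (t := t) (Finset.disjoint_empty_left ∅) (by simp) (by simp)
      (by rw [Finset.empty_union, Finset.compl_empty, Finset.card_univ, hcard])
    rwa [Finset.subtype_eq_empty.mpr fun _ _ => Finset.notMem_empty _, hcard] at h
  exact ⟨key true, key false⟩

theorem statement_9 {V : Type*} [Fintype V] [DecidableEq V] (G : SimpleGraph V)
    (u u' v : V) (huu' : u ≠ u') (huv : u ≠ v) (hu'v : u' ≠ v)
    (hu : ∀ w, w ≠ u' → (G.Adj u w ↔ w = v))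
    (hne : (G.neighborSet u').Nonempty) (hsub : G.neighborSet u' ⊆ {u, v}) :
    balA (G.induce {w | w ≠ u ∧ w ≠ u'}) ≤ balA G ∧
    balI (G.induce {w | w ≠ u ∧ w ≠ u'}) ≤ balI G :=
  statement_9_general G u u' v huu' hu'v hu hne hsub
end

section
/- For every n ≥ 1, the complete graph K_n on n vertices satisfies b^A_g(K_n) = ⌊n/2⌋ and b^I_g(K_n) = ⌊n/2⌋. -/
open SimpleGraph

/-!
In `K_n` every pair of selected vertices is joined by an edge, so the score of a final position
depends only on the sizes `a = |S_0|`, `b = |S_1|`: it is `ab - C(a,2) - C(b,2)`, and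
`2 (ab - C(a,2) - C(b,2)) = a + b - (a - b)^2`. Hence no choice of either player matters: the
players end with `⌈n/2⌉` and `⌊n/2⌋` vertices, and the value is `⌊n/2⌋` whoever starts.
-/

lemma two_mul_choose_two_cast (m : ℕ) : 2 * (m.choose 2 : ℤ) = m * (m - 1) := by
  induction m with
  | zero => simp
  | succ m ih =>
    rw [Nat.choose_succ_succ, Nat.choose_one_right]
    push_cast
    linear_combination ih

def completeScore (a b : ℕ) : ℤ := (a : ℤ) * b - ((a.choose 2 : ℤ) + (b.choose 2 : ℤ))

lemma two_mul_completeScore (a b : ℕ) :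
    2 * completeScore a b = (a + b : ℤ) - ((a : ℤ) - b) ^ 2 := by
  unfold completeScore
  linear_combination -two_mul_choose_two_cast a - two_mul_choose_two_cast b

lemma completeScore_eq_min {a b : ℕ} (hab : a ≤ b + 1) (hba : b ≤ a + 1) :
    completeScore a b = min a b := by
  have h := two_mul_completeScore a b
  rcases (by omega : a = b ∨ a = b + 1 ∨ b = a + 1) with rfl | rfl | rfl <;>
    simp only [min_self, min_eq_left, min_eq_right, Nat.le_succ] <;> push_cast at h ⊢ <;> linarith

section

variable {V : Type*} [DecidableEq V]

lemma top_edgesBetween_eq_image {S0 S1 : Finset V} (h : Disjoint S0 S1) :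
    {e ∈ (⊤ : SimpleGraph V).edgeSet |
        ∃ u ∈ (S0 : Set V), ∃ v ∈ (S1 : Set V), e = s(u, v)} =
      ↑((S0 ×ˢ S1).image Sym2.mk.uncurry) := by
  ext e
  simp only [Set.mem_ofPred_eq, Finset.coe_image, Set.mem_image, Finset.mem_coe,
    Finset.mem_product, Prod.exists, edgeSet_top]
  constructor
  · rintro ⟨-, u, hu, v, hv, rfl⟩
    exact ⟨u, v, ⟨hu, hv⟩, rfl⟩
  · rintro ⟨u, v, ⟨hu, hv⟩, rfl⟩
    refine ⟨?_, u, hu, v, hv, rfl⟩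
    simpa using fun huv : u = v => Finset.disjoint_left.mp h hu (huv ▸ hv)

lemma top_edgesWithin_eq_image (S : Finset V) :
    {e ∈ (⊤ : SimpleGraph V).edgeSet |
        ∃ u ∈ (S : Set V), ∃ v ∈ (S : Set V), e = s(u, v)} =
      ↑(S.offDiag.image Sym2.mk.uncurry) := by
  ext e
  simp only [Set.mem_ofPred_eq, Finset.coe_image, Set.mem_image, Finset.mem_coe,
    Finset.mem_offDiag, Prod.exists, edgeSet_top]
  constructor
  · rintro ⟨he, u, hu, v, hv, rfl⟩
    exact ⟨u, v, ⟨hu, hv, by simpa using he⟩, rfl⟩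
  · rintro ⟨u, v, ⟨hu, hv, huv⟩, rfl⟩
    exact ⟨by simpa using huv, u, hu, v, hv, rfl⟩

lemma bscore_top {S0 S1 : Finset V} (h : Disjoint S0 S1) :
    bscore (⊤ : SimpleGraph V) ↑S0 ↑S1 = completeScore S0.card S1.card := by
  have hinj : Set.InjOn Sym2.mk.uncurry ((S0 ×ˢ S1 : Finset (V × V)) : Set (V × V)) := by
    rintro ⟨u, v⟩ huv ⟨a, b⟩ hab heq
    simp only [Finset.coe_product, Set.mem_prod, Finset.mem_coe] at huv hab
    rcases Sym2.eq_iff.mp heq with ⟨rfl, rfl⟩ | ⟨rfl, rfl⟩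
    · rfl
    · exact absurd hab.2 (Finset.disjoint_left.mp h huv.1)
  have hdisj : Disjoint (S0.offDiag.image Sym2.mk.uncurry) (S1.offDiag.image Sym2.mk.uncurry) := by
    simp only [Finset.disjoint_left, Finset.mem_image, Finset.mem_offDiag, Prod.exists]
    rintro _ ⟨u, v, ⟨hu, hv, -⟩, rfl⟩ ⟨a, b, ⟨ha, -, -⟩, heq⟩
    rcases Sym2.eq_iff.mp heq with ⟨rfl, rfl⟩ | ⟨rfl, rfl⟩
    · exact Finset.disjoint_left.mp h hu ha
    · exact Finset.disjoint_left.mp h hv ha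
  rw [bscore, Set.sep_or, top_edgesBetween_eq_image h, top_edgesWithin_eq_image,
    top_edgesWithin_eq_image, ← Finset.coe_union, Set.ncard_coe_finset, Set.ncard_coe_finset,
    Finset.card_union_of_disjoint hdisj, Sym2.card_image_offDiag, Sym2.card_image_offDiag,
    Finset.card_image_of_injOn hinj, Finset.card_product, completeScore]
  push_cast
  rfl

end

lemma gameVal_top {V : Type*} [Fintype V] (k : ℕ) (t : Bool) {S0 S1 : Finset V}
    (h : Disjoint S0 S1) (hk : S0.card + S1.card + k = Fintype.card V) :
    gameVal (⊤ : SimpleGraph V) k t S0 S1 =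
      if t then completeScore (S0.card + (k + 1) / 2) (S1.card + k / 2)
      else completeScore (S0.card + k / 2) (S1.card + (k + 1) / 2) := by
  -- the same instance `gameVal` uses for its set of free vertices
  let _ := Classical.decEq V
  induction k generalizing t S0 S1 with
  | zero =>
    cases t <;> simpa [gameVal] using bscore_top h
  | succ k ih =>
    have hne : (Finset.univ \ (S0 ∪ S1)).Nonempty := by
      rw [← Finset.card_pos, Finset.card_sdiff_of_subset (Finset.subset_univ _),
        Finset.card_union_of_disjoint h, Finset.card_univ]
      omega
    have hfree {v} (hv : v ∈ Finset.univ \ (S0 ∪ S1)) : v ∉ S0 ∧ v ∉ S1 := by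
      simpa using hv
    rw [gameVal, dif_pos hne]
    cases t with
    | true =>
      refine Finset.inf'_eq_of_forall hne _ fun v hv => ?_
      obtain ⟨hv0, hv1⟩ := hfree hv
      rw [ih false (Finset.disjoint_insert_left.2 ⟨hv1, h⟩)
        (by rw [Finset.card_insert_of_notMem hv0]; omega), Finset.card_insert_of_notMem hv0]
      simp only [Bool.false_eq_true, if_false, if_true]
      congr 1; omega
    | false =>
      refine Finset.sup'_eq_of_forall hne _ fun v hv => ?_
      obtain ⟨hv0, hv1⟩ := hfree hv
      rw [ih true (Finset.disjoint_insert_right.2 ⟨hv0, h⟩)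
        (by rw [Finset.card_insert_of_notMem hv1]; omega), Finset.card_insert_of_notMem hv1]
      simp only [Bool.false_eq_true, if_false, if_true]
      congr 1; omega

theorem statement_11_general (n : ℕ) :
    balA (⊤ : SimpleGraph (Fin n)) = ((n / 2 : ℕ) : ℤ) ∧
    balI (⊤ : SimpleGraph (Fin n)) = ((n / 2 : ℕ) : ℤ) := by
  have hstart (t : Bool) := gameVal_top (V := Fin n) n t (Finset.disjoint_empty_left ∅) (by simp)
  rw [balA, balI, Fintype.card_fin, hstart, hstart]
  simp only [if_true, Bool.false_eq_true, if_false, Finset.card_empty, zero_add]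
  rw [completeScore_eq_min (by omega) (by omega), completeScore_eq_min (by omega) (by omega)]
  omega

theorem statement_11 (n : ℕ) (hn : 1 ≤ n) :
    balA (⊤ : SimpleGraph (Fin n)) = ((n / 2 : ℕ) : ℤ) ∧
    balI (⊤ : SimpleGraph (Fin n)) = ((n / 2 : ℕ) : ℤ) :=
  statement_11_general n
end

section
/- Let p, q ≥ 1 and let K_{p,q} be the complete bipartite graph with parts of sizes p and q. If p·q is even, then b^A_g(K_{p,q}) = 0 and b^I_g(K_{p,q}) = 0; if p·q is odd, then b^A_g(K_{p,q}) = 1 and b^I_g(K_{p,q}) = 1. -/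
open SimpleGraph

/-!
On `K_{α,β}` the score of disjoint `S0, S1` is `x * y`, where `x` counts the left vertices of
`S0` minus those of `S1` and `y` the right vertices of `S1` minus those of `S0`. Admirable's
moves raise `x` or lower `y`, Impish's lower `x` or raise `y`, so the value of a position
depends only on `x`, `y`, the parities of the numbers of unselected vertices on each side and
who is to move. `parityValue` gives it in closed form, verified against the minimax recursion
by induction: a player facing an odd side plays there, and when both sides are even the
opponent answers on the same side, which keeps the score at `x * y`. At the empty position
`x = y = 0`, so the value is `1` if both sides are odd and `0` otherwise.
-/

open Finset

namespace SimpleGraph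

variable {α β : Type*}

lemma mem_edgeSet_completeBipartiteGraph {e : Sym2 (α ⊕ β)} :
    e ∈ (completeBipartiteGraph α β).edgeSet ↔ ∃ a b, e = s(.inl a, .inr b) := by
  induction e using Sym2.ind with
  | h u v => cases u <;> cases v <;> simp [Sym2.eq_swap]

lemma ncard_sep_edgeSet_completeBipartiteGraph (P : Sym2 (α ⊕ β) → Prop) :
    {e ∈ (completeBipartiteGraph α β).edgeSet | P e}.ncard =
      {ab : α × β | P s(.inl ab.1, .inr ab.2)}.ncard := by
  have hinj : Function.Injective fun ab : α × β => s(Sum.inl ab.1, Sum.inr ab.2) := by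
    rintro ⟨a, b⟩ ⟨a', b'⟩ h
    simpa [Sym2.eq_iff] using h
  rw [← Set.ncard_image_of_injective _ hinj]
  congr 1
  ext e
  simp only [mem_edgeSet_completeBipartiteGraph, Set.mem_image, Prod.exists]
  aesop

theorem bscore_completeBipartiteGraph {S0 S1 : Finset (α ⊕ β)} (hd : Disjoint S0 S1) :
    bscore (completeBipartiteGraph α β) S0 S1 =
      ((#S0.toLeft : ℤ) - #S1.toLeft) * ((#S1.toRight : ℤ) - #S0.toRight) := by
  classical
  have hdL : Disjoint S0.toLeft S1.toLeft := Finset.disjoint_left.mpr fun _ ha hb =>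
    Finset.disjoint_left.mp hd (mem_toLeft.mp ha) (mem_toLeft.mp hb)
  have hcross : {ab : α × β | ∃ u ∈ (S0 : Set (α ⊕ β)), ∃ v ∈ (S1 : Set (α ⊕ β)),
      s(.inl ab.1, .inr ab.2) = s(u, v)} =
      ↑(S0.toLeft ×ˢ S1.toRight ∪ S1.toLeft ×ˢ S0.toRight) := by
    ext ⟨a, b⟩; simp; tauto
  have hsame : {ab : α × β | (∃ u ∈ (S0 : Set (α ⊕ β)), ∃ v ∈ (S0 : Set (α ⊕ β)),
      s(.inl ab.1, .inr ab.2) = s(u, v)) ∨ ∃ u ∈ (S1 : Set (α ⊕ β)), ∃ v ∈ (S1 : Set (α ⊕ β)),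
      s(.inl ab.1, .inr ab.2) = s(u, v)} =
      ↑(S0.toLeft ×ˢ S0.toRight ∪ S1.toLeft ×ˢ S1.toRight) := by
    ext ⟨a, b⟩; simp; tauto
  rw [bscore, ncard_sep_edgeSet_completeBipartiteGraph, ncard_sep_edgeSet_completeBipartiteGraph,
    hcross, hsame, Set.ncard_coe_finset, Set.ncard_coe_finset,
    card_union_of_disjoint (disjoint_product.mpr (.inl hdL)),
    card_union_of_disjoint (disjoint_product.mpr (.inl hdL))]
  simp only [card_product]
  push_cast
  ring

end SimpleGraph

namespace Finset

variable {α β γ : Type*}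

lemma nonempty_of_bodd_card {s : Finset α} (h : (#s).bodd) : s.Nonempty := by
  rw [← card_pos]
  by_contra h0
  simp_all

lemma Nonempty.toLeft_or_toRight {u : Finset (α ⊕ β)} (h : u.Nonempty) :
    u.toLeft.Nonempty ∨ u.toRight.Nonempty := by
  rw [← Finset.card_pos, ← card_toLeft_add_card_toRight] at h
  simpa only [← Finset.card_pos] using Nat.add_pos_iff_pos_or_pos.mp h

section Compl

variable [Fintype α] [Fintype β] [DecidableEq α] [DecidableEq β] (s : Finset (α ⊕ β))

lemma toLeft_compl_insert_inl (a : α) : (insert (.inl a) s)ᶜ.toLeft = sᶜ.toLeft.erase a := by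
  ext; simp

lemma toRight_compl_insert_inl (a : α) : (insert (.inl a) s)ᶜ.toRight = sᶜ.toRight := by
  ext; simp

lemma toLeft_compl_insert_inr (b : β) : (insert (.inr b) s)ᶜ.toLeft = sᶜ.toLeft := by
  ext; simp

lemma toRight_compl_insert_inr (b : β) : (insert (.inr b) s)ᶜ.toRight = sᶜ.toRight.erase b := by
  ext; simp

end Compl

lemma image_eq_of_forall_toLeft_toRight {u : Finset (α ⊕ β)} {f : α ⊕ β → γ} {cL cR : γ}
    (hL : ∀ a ∈ u.toLeft, f (.inl a) = cL) (hR : ∀ b ∈ u.toRight, f (.inr b) = cR) :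
    f '' u = {c | (u.toLeft.Nonempty ∧ c = cL) ∨ (u.toRight.Nonempty ∧ c = cR)} := by
  ext c
  simp only [Set.mem_image, mem_coe, Set.mem_ofPred_eq, Finset.Nonempty]
  constructor
  · rintro ⟨a | b, h, rfl⟩
    · exact .inl ⟨⟨a, mem_toLeft.mpr h⟩, hL a (mem_toLeft.mpr h)⟩
    · exact .inr ⟨⟨b, mem_toRight.mpr h⟩, hR b (mem_toRight.mpr h)⟩
  · rintro (⟨⟨a, h⟩, rfl⟩ | ⟨⟨b, h⟩, rfl⟩)
    · exact ⟨_, mem_toLeft.mp h, hL a h⟩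
    · exact ⟨_, mem_toRight.mp h, hR b h⟩

end Finset

/-- `parityValue oddX oddY x y t` is the value of a position of the game on `K_{α,β}` with
balances `x`, `y` in which the numbers of unselected left and right vertices have parities
`oddX`, `oddY`; `t = true` iff Admirable is to move. -/
def parityValue : Bool → Bool → ℤ → ℤ → Bool → ℤ
  | false, false, x, y, _ => x * y
  | false, true, x, y, true => x * (y - 1)
  | false, true, x, y, false => x * (y + 1)
  | true, false, x, y, true => (x + 1) * y
  | true, false, x, y, false => (x - 1) * y
  | true, true, x, y, true => min ((x + 1) * (y + 1)) ((x - 1) * (y - 1))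
  | true, true, x, y, false => max ((x + 1) * (y + 1)) ((x - 1) * (y - 1))

theorem isLeast_parityValue_true {oddX oddY : Bool} {canX canY : Prop}
    (hX : oddX → canX) (hY : oddY → canY) (h : canX ∨ canY) (x y : ℤ) :
    IsLeast {w | (canX ∧ w = parityValue (!oddX) oddY (x + 1) y false) ∨
        (canY ∧ w = parityValue oddX (!oddY) x (y - 1) false)}
      (parityValue oddX oddY x y true) := by
  refine ⟨?_, ?_⟩
  · cases oddX <;> cases oddY <;> simp [parityValue] at hX hY ⊢
    all_goals first | tauto | exact (le_total _ _).imp (And.intro hX) (And.intro hY)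
  · rintro w (⟨-, rfl⟩ | ⟨-, rfl⟩) <;> cases oddX <;> cases oddY <;> simp [parityValue]

theorem isGreatest_parityValue_false {oddX oddY : Bool} {canX canY : Prop}
    (hX : oddX → canX) (hY : oddY → canY) (h : canX ∨ canY) (x y : ℤ) :
    IsGreatest {w | (canX ∧ w = parityValue (!oddX) oddY (x - 1) y true) ∨
        (canY ∧ w = parityValue oddX (!oddY) x (y + 1) true)}
      (parityValue oddX oddY x y false) := by
  refine ⟨?_, ?_⟩
  · cases oddX <;> cases oddY <;> simp [parityValue] at hX hY ⊢
    all_goals first | tauto | exact (le_total _ _).imp (And.intro hX) (And.intro hY)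
  · rintro w (⟨-, rfl⟩ | ⟨-, rfl⟩) <;> cases oddX <;> cases oddY <;> simp [parityValue]

theorem parityValue_zero_zero (oddX oddY t : Bool) :
    parityValue oddX oddY 0 0 t = (oddX && oddY).toNat := by
  cases oddX <;> cases oddY <;> cases t <;> rfl

section GameVal

variable {V : Type*} [Fintype V] [DecidableEq V] (G : SimpleGraph V) (k : ℕ) (S0 S1 : Finset V)

theorem gameVal_succ_true (h : (S0 ∪ S1)ᶜ.Nonempty) :
    gameVal G (k + 1) true S0 S1 =
      (S0 ∪ S1)ᶜ.inf' h fun v => gameVal G k false (insert v S0) S1 := by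
  simp only [gameVal, compl_eq_univ_sdiff] at h ⊢
  rw [dif_pos (by convert h), if_pos trivial]
  congr!

theorem gameVal_succ_false (h : (S0 ∪ S1)ᶜ.Nonempty) :
    gameVal G (k + 1) false S0 S1 =
      (S0 ∪ S1)ᶜ.sup' h fun v => gameVal G k true S0 (insert v S1) := by
  simp only [gameVal, compl_eq_univ_sdiff] at h ⊢
  rw [dif_pos (by convert h), if_neg Bool.false_ne_true]
  congr!

end GameVal

section CompleteBipartite

variable {α β : Type*} [Fintype α] [Fintype β] [DecidableEq α] [DecidableEq β]

def bipartiteValue (S0 S1 : Finset (α ⊕ β)) (t : Bool) : ℤ :=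
  parityValue (#(S0 ∪ S1)ᶜ.toLeft).bodd (#(S0 ∪ S1)ᶜ.toRight).bodd
    (#S0.toLeft - #S1.toLeft) (#S1.toRight - #S0.toRight) t

theorem isLeast_bipartiteValue_true {S0 S1 : Finset (α ⊕ β)} (h : (S0 ∪ S1)ᶜ.Nonempty) :
    IsLeast ((fun v => bipartiteValue (insert v S0) S1 false) '' ↑(S0 ∪ S1)ᶜ)
      (bipartiteValue S0 S1 true) := by
  have key : IsLeast _ (bipartiteValue S0 S1 true) :=
    isLeast_parityValue_true nonempty_of_bodd_card nonempty_of_bodd_card h.toLeft_or_toRight _ _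
  convert key using 1
  apply image_eq_of_forall_toLeft_toRight
  · intro a ha
    have ha0 : a ∉ S0.toLeft := by simp_all
    rw [bipartiteValue, insert_union, toLeft_compl_insert_inl, toRight_compl_insert_inl,
      toLeft_insert_inl, toRight_insert_inl, card_insert_of_notMem ha0, ← card_erase_add_one ha,
      Nat.bodd_succ, Bool.not_not]
    congr 1; push_cast; ring
  · intro b hb
    have hb0 : b ∉ S0.toRight := by simp_all
    rw [bipartiteValue, insert_union, toLeft_compl_insert_inr, toRight_compl_insert_inr,
      toLeft_insert_inr, toRight_insert_inr, card_insert_of_notMem hb0, ← card_erase_add_one hb,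
      Nat.bodd_succ, Bool.not_not]
    congr 1; push_cast; ring

theorem isGreatest_bipartiteValue_false {S0 S1 : Finset (α ⊕ β)} (h : (S0 ∪ S1)ᶜ.Nonempty) :
    IsGreatest ((fun v => bipartiteValue S0 (insert v S1) true) '' ↑(S0 ∪ S1)ᶜ)
      (bipartiteValue S0 S1 false) := by
  have key : IsGreatest _ (bipartiteValue S0 S1 false) :=
    isGreatest_parityValue_false nonempty_of_bodd_card nonempty_of_bodd_card h.toLeft_or_toRight _ _
  convert key using 1
  apply image_eq_of_forall_toLeft_toRight
  · intro a ha
    have ha1 : a ∉ S1.toLeft := by simp_all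
    rw [bipartiteValue, union_insert, toLeft_compl_insert_inl, toRight_compl_insert_inl,
      toLeft_insert_inl, toRight_insert_inl, card_insert_of_notMem ha1, ← card_erase_add_one ha,
      Nat.bodd_succ, Bool.not_not]
    congr 1; push_cast; ring
  · intro b hb
    have hb1 : b ∉ S1.toRight := by simp_all
    rw [bipartiteValue, union_insert, toLeft_compl_insert_inr, toRight_compl_insert_inr,
      toLeft_insert_inr, toRight_insert_inr, card_insert_of_notMem hb1, ← card_erase_add_one hb,
      Nat.bodd_succ, Bool.not_not]
    congr 1; push_cast; ring

theorem gameVal_completeBipartiteGraph (t : Bool) {S0 S1 : Finset (α ⊕ β)}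
    (hd : Disjoint S0 S1) :
    gameVal (completeBipartiteGraph α β) #(S0 ∪ S1)ᶜ t S0 S1 = bipartiteValue S0 S1 t := by
  obtain ⟨k, hk⟩ : ∃ k, #(S0 ∪ S1)ᶜ = k := ⟨_, rfl⟩
  rw [hk]
  induction k generalizing t S0 S1 with
  | zero =>
    have hsum := card_toLeft_add_card_toRight (u := (S0 ∪ S1)ᶜ)
    rw [gameVal, bscore_completeBipartiteGraph hd, bipartiteValue,
      show #(S0 ∪ S1)ᶜ.toLeft = 0 by omega, show #(S0 ∪ S1)ᶜ.toRight = 0 by omega]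
    rfl
  | succ k ih =>
    have hne : (S0 ∪ S1)ᶜ.Nonempty := card_pos.mp (by omega)
    have hcard : ∀ v ∈ (S0 ∪ S1)ᶜ, #(insert v (S0 ∪ S1))ᶜ = k := fun v hv => by
      rw [compl_insert, card_erase_of_mem hv]; omega
    cases t
    · rw [gameVal_succ_false _ _ _ _ hne, sup'_eq_csSup_image,
        ← (isGreatest_bipartiteValue_false hne).csSup_eq]
      refine congrArg _ (Set.image_congr fun v hv => ?_)
      obtain ⟨hv0, -⟩ := notMem_union.mp (mem_compl.mp hv)
      exact ih true (disjoint_insert_right.mpr ⟨hv0, hd⟩)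
        (by rw [union_insert]; exact hcard v hv)
    · rw [gameVal_succ_true _ _ _ _ hne, inf'_eq_csInf_image,
        ← (isLeast_bipartiteValue_true hne).csInf_eq]
      refine congrArg _ (Set.image_congr fun v hv => ?_)
      obtain ⟨-, hv1⟩ := notMem_union.mp (mem_compl.mp hv)
      exact ih false (disjoint_insert_left.mpr ⟨hv1, hd⟩)
        (by rw [insert_union]; exact hcard v hv)

end CompleteBipartite

theorem gameVal_completeBipartiteGraph_empty {α β : Type*} [Fintype α] [Fintype β] (t : Bool) :
    gameVal (completeBipartiteGraph α β) (Fintype.card (α ⊕ β)) t ∅ ∅ =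
      (Fintype.card α * Fintype.card β % 2 : ℕ) := by
  classical
  have h := gameVal_completeBipartiteGraph t (disjoint_empty_left (∅ : Finset (α ⊕ β)))
  simp only [union_idempotent, compl_empty, card_univ, Fintype.card_sum, bipartiteValue,
    toLeft_univ, toRight_univ, sub_self] at h
  rw [Fintype.card_sum, h, Nat.mod_two_of_bodd, Nat.bodd_mul]
  simpa using parityValue_zero_zero _ _ t

theorem statement_12_general (p q : ℕ) :
    (Even (p * q) →
      balA (completeBipartiteGraph (Fin p) (Fin q)) = 0 ∧
      balI (completeBipartiteGraph (Fin p) (Fin q)) = 0) ∧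
    (Odd (p * q) →
      balA (completeBipartiteGraph (Fin p) (Fin q)) = 1 ∧
      balI (completeBipartiteGraph (Fin p) (Fin q)) = 1) := by
  simp only [balA, balI, gameVal_completeBipartiteGraph_empty, Fintype.card_fin]
  refine ⟨fun h => ?_, fun h => ?_⟩
  · simp [Nat.even_iff.mp h]
  · simp [Nat.odd_iff.mp h]

theorem statement_12 (p q : ℕ) (hp : 1 ≤ p) (hq : 1 ≤ q) :
    (Even (p * q) →
      balA (completeBipartiteGraph (Fin p) (Fin q)) = 0 ∧
      balI (completeBipartiteGraph (Fin p) (Fin q)) = 0) ∧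
    (Odd (p * q) →
      balA (completeBipartiteGraph (Fin p) (Fin q)) = 1 ∧
      balI (completeBipartiteGraph (Fin p) (Fin q)) = 1) :=
  statement_12_general p q
end
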